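/- arXiv:2003.10179 — 3 statements merged into one kernel-verified Lean document; each statement's English description precedes it below -/
import Mathlib

section
/- Let x_j < x_σ < x_{j+1} be real numbers. Let Λ, V, s : ℝ → ℝ be continuous on [x_j, x_{j+1}] with Λ > 0 there, let c : ℝ → ℝ be differentiable on [x_j, x_{j+1}], and suppose the flux f := −Λ c' + c V is differentiable on (x_j, x_{j+1}) with f'(x) = s(x) for all x ∈ (x_j, x_{j+1}) and f continuous on [x_j, x_{j+1}]. Define P̂(x) := ∫_{x_σ}^{x} V(t)/Λ(t) dt and ŝ(x) := ∫_{x_σ}^{x} s(t) dt, and set I := ∫_{x_j}^{x_{j+1}} Λ(x)^{−1} e^{−P̂(x)} dx (which is strictly positive). Then the flux at x_σ splits into a homogeneous and an inhomogeneous part: f(x_σ) = −(e^{−P̂(x_{j+1})} c(x_{j+1}) − e^{−P̂(x_j)} c(x_j))/I − (∫_{x_j}^{x_{j+1}} Λ(x)^{−1} e^{−P̂(x)} ŝ(x) dx)/I. -/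
/-!
With the weight `w := Λ⁻¹ e^{-P̂}` one has `(e^{-P̂} c)' = -w f`, because `P̂' = V / Λ`.
Integrating over `[x_j, x_{j+1}]` and writing `f = f(x_σ) + ŝ` (the conservation law
`f' = s`) gives `e^{-P̂} c |_{x_j}^{x_{j+1}} = -f(x_σ) I - ∫ w ŝ`; solve for `f(x_σ)`.
-/

open Set Real MeasureTheory intervalIntegral

theorem eq_add_integral_of_hasDerivAt_Ioo {f f' : ℝ → ℝ} {a b x y : ℝ}
    (hfc : ContinuousOn f (Icc a b)) (hf : ∀ t ∈ Ioo a b, HasDerivAt f (f' t) t)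
    (hint : IntervalIntegrable f' volume a b) (hx : x ∈ Icc a b) (hy : y ∈ Icc a b) :
    f y = f x + ∫ t in x..y, f' t := by
  have hsub : uIcc x y ⊆ Icc a b := uIcc_subset_Icc hx hy
  have hIoo : Ioo (min x y) (max x y) ⊆ Ioo a b := fun t ht =>
    ⟨(le_min hx.1 hy.1).trans_lt ht.1, ht.2.trans_le (max_le hx.2 hy.2)⟩
  rw [integral_eq_sub_of_hasDeriv_right (hfc.mono hsub)
    (fun t ht => (hf t (hIoo ht)).hasDerivWithinAt)
    (hint.mono_set (by rwa [uIcc_of_le (hx.1.trans hx.2)]))]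
  ring

theorem hasDerivAt_integral_of_continuousOn_Icc {g : ℝ → ℝ} {a b x₀ x : ℝ}
    (hg : ContinuousOn g (Icc a b)) (hx₀ : x₀ ∈ Icc a b) (hx : x ∈ Ioo a b) :
    HasDerivAt (fun y => ∫ t in x₀..y, g t) (g x) x := by
  have hnhds : Icc a b ∈ nhds x := Icc_mem_nhds hx.1 hx.2
  exact integral_hasDerivAt_right
    ((hg.mono (uIcc_subset_Icc hx₀ (Ioo_subset_Icc_self hx))).intervalIntegrable)
    ⟨Icc a b, hnhds, hg.aestronglyMeasurable measurableSet_Icc⟩ (hg.continuousAt hnhds)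

theorem hasDerivAt_exp_neg_mul {P Λ V c : ℝ → ℝ} {x : ℝ}
    (hP : HasDerivAt P (V x / Λ x) x) (hc : DifferentiableAt ℝ c x) (hΛ : Λ x ≠ 0) :
    HasDerivAt (fun y => exp (-P y) * c y)
      (-((Λ x)⁻¹ * exp (-P x)) * (-Λ x * deriv c x + c x * V x)) x := by
  refine ((hP.neg.exp).mul hc.hasDerivAt).congr_deriv ?_
  simp only [Pi.neg_apply]
  field_simp
  ring

theorem exp_neg_mul_sub_eq_neg_integral {a b : ℝ} {P Λ V c f : ℝ → ℝ} (hab : a ≤ b)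
    (hPc : ContinuousOn P (Icc a b)) (hP : ∀ x ∈ Ioo a b, HasDerivAt P (V x / Λ x) x)
    (hc : ∀ x ∈ Icc a b, DifferentiableAt ℝ c x) (hΛ : ∀ x ∈ Ioo a b, Λ x ≠ 0)
    (hf : ∀ x ∈ Ioo a b, f x = -Λ x * deriv c x + c x * V x)
    (hint : IntervalIntegrable (fun x => (Λ x)⁻¹ * exp (-P x) * f x) volume a b) :
    exp (-P b) * c b - exp (-P a) * c a = -∫ x in a..b, (Λ x)⁻¹ * exp (-P x) * f x := by
  rw [← intervalIntegral.integral_neg]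
  refine (integral_eq_sub_of_hasDeriv_right_of_le (f := fun y => exp (-P y) * c y)
    (f' := fun x => -((Λ x)⁻¹ * exp (-P x) * f x)) hab
    (hPc.neg.rexp.mul fun x hx => (hc x hx).continuousAt.continuousWithinAt)
    (fun x hx => ?_) hint.neg).symm
  rw [hf x hx, ← neg_mul]
  exact (hasDerivAt_exp_neg_mul (hP x hx) (hc x (Ioo_subset_Icc_self hx)) (hΛ x hx)
    |>.hasDerivWithinAt)

theorem integral_mul_eq_const_mul_add {w f g : ℝ → ℝ} {a b k : ℝ}
    (hfg : EqOn f (fun x => k + g x) (uIcc a b)) (hw : IntervalIntegrable w volume a b)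
    (hwg : IntervalIntegrable (fun x => w x * g x) volume a b) :
    ∫ x in a..b, w x * f x = k * (∫ x in a..b, w x) + ∫ x in a..b, w x * g x := by
  rw [integral_congr fun x hx => by rw [hfg hx, mul_add, mul_comm (w x) k],
    integral_add (hw.const_mul k) hwg, intervalIntegral.integral_const_mul]

/-- The exact flux at the interface point splits into a homogeneous part and
an inhomogeneous part (complete flux representation in one dimension). -/
theorem complete_flux_splitting
    (xj xσ xj1 : ℝ) (h1 : xj < xσ) (h2 : xσ < xj1)
    (Λ V s c : ℝ → ℝ)
    (hΛc : ContinuousOn Λ (Set.Icc xj xj1))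
    (hVc : ContinuousOn V (Set.Icc xj xj1))
    (hsc : ContinuousOn s (Set.Icc xj xj1))
    (hΛpos : ∀ x ∈ Set.Icc xj xj1, 0 < Λ x)
    (hc : ∀ x ∈ Set.Icc xj xj1, DifferentiableAt ℝ c x)
    (f : ℝ → ℝ) (hf : f = fun x => -Λ x * deriv c x + c x * V x)
    (hfc : ContinuousOn f (Set.Icc xj xj1))
    (hf' : ∀ x ∈ Set.Ioo xj xj1, HasDerivAt f (s x) x)
    (Phat shat : ℝ → ℝ)
    (hPhat : Phat = fun x => ∫ t in xσ..x, V t / Λ t)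
    (hshat : shat = fun x => ∫ t in xσ..x, s t)
    (I : ℝ) (hI : I = ∫ x in xj..xj1, (Λ x)⁻¹ * Real.exp (-Phat x)) :
    0 < I ∧
    f xσ = -(Real.exp (-Phat xj1) * c xj1 - Real.exp (-Phat xj) * c xj) / I
      - (∫ x in xj..xj1, (Λ x)⁻¹ * Real.exp (-Phat x) * shat x) / I := by
  have hlt : xj < xj1 := h1.trans h2
  have hK : uIcc xj xj1 = Icc xj xj1 := uIcc_of_le hlt.le
  have hσ : xσ ∈ Icc xj xj1 := ⟨h1.le, h2.le⟩
  have hΛne : ∀ x ∈ Icc xj xj1, Λ x ≠ 0 := fun x hx => (hΛpos x hx).ne'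
  have hVΛc : ContinuousOn (fun t => V t / Λ t) (Icc xj xj1) := hVc.div hΛc hΛne
  have hP' : ∀ x ∈ Ioo xj xj1, HasDerivAt Phat (V x / Λ x) x := fun x hx =>
    hPhat ▸ hasDerivAt_integral_of_continuousOn_Icc hVΛc hσ hx
  have hPc : ContinuousOn Phat (Icc xj xj1) := hPhat ▸ hK ▸
    continuousOn_primitive_interval' (hVΛc.intervalIntegrable_of_Icc hlt.le) (hK ▸ hσ)
  have hshatc : ContinuousOn shat (Icc xj xj1) := hshat ▸ hK ▸
    continuousOn_primitive_interval' (hsc.intervalIntegrable_of_Icc hlt.le) (hK ▸ hσ)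
  have hwc : ContinuousOn (fun x => (Λ x)⁻¹ * exp (-Phat x)) (Icc xj xj1) :=
    (hΛc.inv₀ hΛne).mul hPc.neg.rexp
  have hconserv : ∀ x ∈ Icc xj xj1, f x = f xσ + shat x := fun x hx =>
    hshat ▸ eq_add_integral_of_hasDerivAt_Ioo hfc hf'
      (hsc.intervalIntegrable_of_Icc hlt.le) hσ hx
  have hIpos : 0 < I := hI ▸ intervalIntegral_pos_of_pos_on
    (hwc.intervalIntegrable_of_Icc hlt.le)
    (fun x hx => mul_pos (inv_pos.2 (hΛpos x (Ioo_subset_Icc_self hx))) (exp_pos _)) hlt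
  have hhom := exp_neg_mul_sub_eq_neg_integral hlt.le hPc hP' hc
    (fun x hx => hΛne x (Ioo_subset_Icc_self hx)) (fun x _ => congrFun hf x)
    ((hwc.mul hfc).intervalIntegrable_of_Icc hlt.le)
  have hsplit := integral_mul_eq_const_mul_add (fun x hx => hconserv x (hK ▸ hx))
    (hwc.intervalIntegrable_of_Icc hlt.le) ((hwc.mul hshatc).intervalIntegrable_of_Icc hlt.le)
  refine ⟨hIpos, ?_⟩
  rw [hhom, hsplit, ← hI]
  field_simp
  ring
end

section
/- Let Λ > 0 and V ≠ 0 be real constants, let x_j < x_σ < x_{j+1}, set Δx := x_{j+1} − x_j, θ := (x_σ − x_j)/Δx ∈ (0,1), P := V·Δx/Λ, and P̂(x) := (V/Λ)(x − x_σ). Let s : ℝ → ℝ be the piecewise constant function equal to s_j on (x_j, x_σ) and to s_{j+1} on (x_σ, x_{j+1}), and set ŝ(x) := ∫_{x_σ}^{x} s(t) dt. Then the inhomogeneous flux has the closed form −(∫_{x_j}^{x_{j+1}} Λ^{−1} e^{−P̂(x)} ŝ(x) dx) / (∫_{x_j}^{x_{j+1}} Λ^{−1} e^{−P̂(x)} dx)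 = Δx·(Z(−P, θ)·s_j − Z(P, 1−θ)·s_{j+1}), where Z(P, α) := (e^{αP} − 1 − αP)/(P(e^{P} − 1)); at the midpoint θ = 1/2 this reduces to the classical complete flux correction Δx·(Z(−P, 1/2)·s_j − Z(P, 1/2)·s_{j+1}). -/
/-- The function `Z(P, α) = (e^{αP} − 1 − αP)/(P(e^{P} − 1))`. -/
noncomputable def Zfun (P α : ℝ) : ℝ :=
  (Real.exp (α * P) - 1 - α * P) / (P * (Real.exp P - 1))

/-!
On each side of `x_σ` the source is constant, so `ŝ` is linear there:
`ŝ(x) = s_j (x - x_σ)` to the left and `ŝ(x) = s_{j+1} (x - x_σ)` to the right. With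
`k = -V/Λ` the flux becomes a quotient of the elementary integrals of `e^{k(x - x_σ)}` and
`e^{k(x - x_σ)} (x - x_σ)`. In the variables `p = k(x_σ - x_j)` and `q = k(x_{j+1} - x_σ)`,
for which `-P = p + q` and `θ · (-P) = p`, the two quotients are `Δx Z(-P, θ)` and
`Δx Z(P, 1 - θ)`.
-/

open Real MeasureTheory Set
open scoped Interval

theorem intervalIntegral_eq_smul_of_eqOn_Ioo {E : Type*} [NormedAddCommGroup E]
    [NormedSpace ℝ E] [CompleteSpace E] {f : ℝ → E} {a b x y : ℝ} {c : E}
    (hf : EqOn f (fun _ => c) (Ioo a b))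
    (hx : x ∈ Icc a b) (hy : y ∈ Icc a b) :
    ∫ t in x..y, f t = (y - x) • c := by
  have hsub : Ι x y ⊆ Ioc a b := fun t ht =>
    ⟨(le_min hx.1 hy.1).trans_lt ht.1, ht.2.trans (max_le hx.2 hy.2)⟩
  rw [← intervalIntegral.integral_const]
  refine intervalIntegral.integral_congr_ae ?_
  filter_upwards [(countable_singleton b).ae_notMem volume] with t htb ht
  exact hf ⟨(hsub ht).1, lt_of_le_of_ne (hsub ht).2 htb⟩

theorem integral_mul_primitive_of_eqOn_Ioo {g s : ℝ → ℝ} {a b c u v : ℝ}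
    (hg : Continuous g) (hac : a ≤ c) (hcb : c ≤ b)
    (hu : EqOn s (fun _ => u) (Ioo a c)) (hv : EqOn s (fun _ => v) (Ioo c b)) :
    ∫ x in a..b, g x * ∫ t in c..x, s t =
      u * (∫ x in a..c, g x * (x - c)) + v * ∫ x in c..b, g x * (x - c) := by
  have hL : EqOn (fun x => g x * ∫ t in c..x, s t) (fun x => u * (g x * (x - c)))
      (uIcc a c) := by
    intro x hx
    rw [uIcc_of_le hac] at hx
    simp only [intervalIntegral_eq_smul_of_eqOn_Ioo hu (right_mem_Icc.2 hac) hx, smul_eq_mul]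
    ring
  have hR : EqOn (fun x => g x * ∫ t in c..x, s t) (fun x => v * (g x * (x - c)))
      (uIcc c b) := by
    intro x hx
    rw [uIcc_of_le hcb] at hx
    simp only [intervalIntegral_eq_smul_of_eqOn_Ioo hv (left_mem_Icc.2 hcb) hx, smul_eq_mul]
    ring
  have hcont : Continuous fun x => g x * (x - c) := by fun_prop
  rw [← intervalIntegral.integral_add_adjacent_intervals
      (((hcont.const_mul u).continuousOn.congr hL).intervalIntegrable (μ := volume))
      (((hcont.const_mul v).continuousOn.congr hR).intervalIntegrable (μ := volume)),
    intervalIntegral.integral_congr hL, intervalIntegral.integral_congr hR,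
    intervalIntegral.integral_const_mul, intervalIntegral.integral_const_mul]

theorem integral_exp_mul_sub (k c a b : ℝ) (hk : k ≠ 0) :
    ∫ x in a..b, exp (k * (x - c)) = (exp (k * (b - c)) - exp (k * (a - c))) / k := by
  have hderiv (x : ℝ) : HasDerivAt (fun x => exp (k * (x - c)) / k) (exp (k * (x - c))) x := by
    refine ((((hasDerivAt_id' x).sub_const c).const_mul k).exp.div_const k).congr_deriv ?_
    field_simp
  rw [intervalIntegral.integral_eq_sub_of_hasDerivAt (fun x _ => hderiv x)
    ((by fun_prop : Continuous _).intervalIntegrable a b)]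
  ring

theorem integral_exp_mul_sub_mul_sub (k c a b : ℝ) (hk : k ≠ 0) :
    ∫ x in a..b, exp (k * (x - c)) * (x - c) =
      (exp (k * (b - c)) * (k * (b - c) - 1) - exp (k * (a - c)) * (k * (a - c) - 1)) / k ^ 2 := by
  have hderiv (x : ℝ) : HasDerivAt (fun x => exp (k * (x - c)) * (k * (x - c) - 1) / k ^ 2)
      (exp (k * (x - c)) * (x - c)) x := by
    have hlin := ((hasDerivAt_id' x).sub_const c).const_mul k
    refine ((hlin.exp.mul (hlin.sub_const 1)).div_const (k ^ 2)).congr_deriv ?_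
    field_simp
    ring
  rw [intervalIntegral.integral_eq_sub_of_hasDerivAt (fun x _ => hderiv x)
    ((by fun_prop : Continuous _).intervalIntegrable a b)]
  ring

theorem integral_exp_mul_sub_ne_zero {k a b : ℝ} (c : ℝ) (hk : k ≠ 0) (hab : a ≠ b) :
    ∫ x in a..b, exp (k * (x - c)) ≠ 0 := by
  rw [integral_exp_mul_sub k c a b hk]
  refine div_ne_zero (sub_ne_zero.2 (exp_injective.ne ?_)) hk
  intro h
  exact hab (by simpa [hk] using h.symm)

theorem mul_Zfun_eq_neg_integral_div_integral {k a b : ℝ} (c : ℝ) (hk : k ≠ 0)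
    (hab : a ≠ b) :
    (b - a) * Zfun (k * (b - a)) ((c - a) / (b - a)) =
      -(∫ x in a..c, exp (k * (x - c)) * (x - c)) / ∫ x in a..b, exp (k * (x - c)) := by
  have hba : b - a ≠ 0 := sub_ne_zero.2 hab.symm
  have hP : k * (c - a) + k * (b - c) ≠ 0 := by
    rw [← mul_add]; exact mul_ne_zero hk (by simpa using hba)
  rw [integral_exp_mul_sub k c a b hk, integral_exp_mul_sub_mul_sub k c a c hk, Zfun,
    show (c - a) / (b - a) * (k * (b - a)) = k * (c - a) by field_simp,
    show k * (b - a) = k * (c - a) + k * (b - c) by ring,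
    show b - a = (k * (c - a) + k * (b - c)) / k by field_simp; ring,
    show k * (a - c) = -(k * (c - a)) by ring, sub_self, mul_zero, exp_zero]
  generalize k * (c - a) = p at *
  generalize k * (b - c) = q at *
  have hE : exp q * exp p ≠ 1 := by rw [← exp_add]; simpa [add_comm] using hP
  rw [exp_add, exp_neg]
  have hD : exp q - (exp p)⁻¹ ≠ 0 := by
    rw [show exp q - (exp p)⁻¹ = (exp q * exp p - 1) / exp p by field_simp]
    exact div_ne_zero (sub_ne_zero.2 hE) (exp_ne_zero p)
  field_simp
  ring

theorem mul_Zfun_neg_eq_integral_div_integral {k a b : ℝ} (c : ℝ) (hk : k ≠ 0)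
    (hab : a ≠ b) :
    (b - a) * Zfun (-(k * (b - a))) (1 - (c - a) / (b - a)) =
      (∫ x in c..b, exp (k * (x - c)) * (x - c)) / ∫ x in a..b, exp (k * (x - c)) := by
  have hba : b - a ≠ 0 := sub_ne_zero.2 hab.symm
  have hP : k * (c - a) + k * (b - c) ≠ 0 := by
    rw [← mul_add]; exact mul_ne_zero hk (by simpa using hba)
  rw [integral_exp_mul_sub k c a b hk, integral_exp_mul_sub_mul_sub k c c b hk, Zfun,
    show (1 - (c - a) / (b - a)) * -(k * (b - a)) = -(k * (b - c)) by field_simp; ring,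
    show k * (b - a) = k * (c - a) + k * (b - c) by ring,
    show b - a = (k * (c - a) + k * (b - c)) / k by field_simp; ring,
    show k * (a - c) = -(k * (c - a)) by ring, sub_self, mul_zero, exp_zero]
  generalize k * (c - a) = p at *
  generalize k * (b - c) = q at *
  have hE : exp q * exp p ≠ 1 := by rw [← exp_add]; simpa [add_comm] using hP
  have hE' : 1 - exp q * exp p ≠ 0 := sub_ne_zero.2 hE.symm
  rw [exp_neg, exp_neg, exp_add, exp_neg]
  have hD : exp q - (exp p)⁻¹ ≠ 0 := by
    rw [show exp q - (exp p)⁻¹ = (exp q * exp p - 1) / exp p by field_simp]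
    exact div_ne_zero (sub_ne_zero.2 hE) (exp_ne_zero p)
  field_simp
  ring

/-- Closed form of the inhomogeneous flux of the complete flux scheme for
constant coefficients and a piecewise constant source. -/
theorem inhomogeneous_flux_closed_form
    (Λ V xj xσ xj1 : ℝ) (hΛ : 0 < Λ) (hV : V ≠ 0)
    (h1 : xj < xσ) (h2 : xσ < xj1)
    (Δx θ P : ℝ) (hΔx : Δx = xj1 - xj) (hθ : θ = (xσ - xj) / Δx) (hP : P = V * Δx / Λ)
    (Phat : ℝ → ℝ) (hPhat : Phat = fun x => V / Λ * (x - xσ))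
    (s : ℝ → ℝ) (sj sj1 : ℝ)
    (hs1 : ∀ x ∈ Set.Ioo xj xσ, s x = sj)
    (hs2 : ∀ x ∈ Set.Ioo xσ xj1, s x = sj1)
    (shat : ℝ → ℝ) (hshat : shat = fun x => ∫ t in xσ..x, s t) :
    -(∫ x in xj..xj1, Λ⁻¹ * Real.exp (-Phat x) * shat x) /
        (∫ x in xj..xj1, Λ⁻¹ * Real.exp (-Phat x)) =
      Δx * (Zfun (-P) θ * sj - Zfun P (1 - θ) * sj1) ∧
    (θ = 1 / 2 →
      -(∫ x in xj..xj1, Λ⁻¹ * Real.exp (-Phat x) * shat x) /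
          (∫ x in xj..xj1, Λ⁻¹ * Real.exp (-Phat x)) =
        Δx * (Zfun (-P) (1 / 2) * sj - Zfun P (1 / 2) * sj1)) := by
  set k := -(V / Λ)
  have hk : k ≠ 0 := neg_ne_zero.2 (div_ne_zero hV hΛ.ne')
  have hkP : P = -(k * (xj1 - xj)) := by rw [hP, hΔx]; ring
  have hPhat_neg (x : ℝ) : -Phat x = k * (x - xσ) := by rw [hPhat]; ring
  have hflux : -(∫ x in xj..xj1, Λ⁻¹ * exp (-Phat x) * shat x) /
      (∫ x in xj..xj1, Λ⁻¹ * exp (-Phat x)) =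
        Δx * (Zfun (-P) θ * sj - Zfun P (1 - θ) * sj1) := by
    have hD := integral_exp_mul_sub_ne_zero xσ hk (h1.trans h2).ne
    simp only [hPhat_neg, hshat, mul_assoc, intervalIntegral.integral_const_mul]
    rw [integral_mul_primitive_of_eqOn_Ioo (by fun_prop) h1.le h2.le hs1 hs2]
    rw [hθ, hΔx, hkP, neg_neg, mul_sub, ← mul_assoc, ← mul_assoc,
      mul_Zfun_eq_neg_integral_div_integral xσ hk (h1.trans h2).ne,
      mul_Zfun_neg_eq_integral_div_integral xσ hk (h1.trans h2).ne]
    field_simp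
    ring
  exact ⟨hflux, fun hθ_half => by rw [hflux, hθ_half]; norm_num⟩
end

section
/- Let Λ > 0 and V ≠ 0 be real constants, let x_j < x_σ < x_{j+1}, set Δx := x_{j+1} − x_j, θ := (x_σ − x_j)/Δx ∈ (0,1), and P := V·Δx/Λ. Let s_j, s_{j+1} ∈ ℝ, and let c : ℝ → ℝ be differentiable on [x_j, x_{j+1}] such that the flux f := −Λ c' + c V is continuous on [x_j, x_{j+1}] and differentiable on (x_j, x_σ) and (x_σ, x_{j+1}) with f'(x) = s_j for x ∈ (x_j, x_σ) and f'(x) = s_{j+1} for x ∈ (x_σ, x_{j+1}). Then the exact flux at x_σ equals the Scharfetter–Gummel homogeneous flux plus the inhomogeneous correction: f(x_σ) = (Λ/Δx)·(B(−P)·c(x_j) − B(P)·c(x_{j+1})) + Δx·(Z(−P, θ)·s_j − Z(P, 1−θ)·s_{j+1}), where B(t) := t/(e^{t} − 1) and Z(P, α) := (e^{αP} − 1 − αP)/(P(e^{P} − 1)). -/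
noncomputable def Bern (t : ℝ) : ℝ := t / (Real.exp t - 1)

/-!
On each of the two subintervals the flux `f` has constant slope `s`, so `c - f / V - s Λ / V²`
solves `w' = (V / Λ) w` and is multiplied by `exp (V / Λ · length)` across the subinterval, while
`f` itself changes by `s · length`. Eliminating `c(x_σ)` between the two resulting relations leaves
an equation that is linear in `f(x_σ)`; its solution, rewritten with `P = V Δx / Λ` and
`e^P = e^{θP} e^{(1-θ)P}`, is the homogeneous plus inhomogeneous flux.
-/

open Set Real

theorem sub_eq_mul_sub_of_hasDerivAt_const {f : ℝ → ℝ} {s a b : ℝ} (hab : a < b)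
    (hf : ContinuousOn f (Icc a b)) (hf' : ∀ x ∈ Ioo a b, HasDerivAt f s x) :
    f b - f a = s * (b - a) := by
  obtain ⟨_, _, hslope⟩ := exists_hasDerivAt_eq_slope f (fun _ => s) hab hf hf'
  rw [hslope, div_mul_cancel₀ _ (sub_ne_zero.2 hab.ne')]

theorem eq_exp_mul_of_hasDerivAt_eq_mul {w : ℝ → ℝ} {k a b : ℝ} (hab : a < b)
    (hw : ContinuousOn w (Icc a b)) (hw' : ∀ x ∈ Ioo a b, HasDerivAt w (k * w x) x) :
    w b = exp (k * (b - a)) * w a := by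
  have hconst := sub_eq_mul_sub_of_hasDerivAt_const (f := fun x => exp (-k * x) * w x) (s := 0)
    hab ((continuous_const.mul continuous_id).rexp.continuousOn.mul hw) fun x hx => by
      refine (((hasDerivAt_id' x).const_mul (-k)).exp.mul (hw' x hx)).congr_deriv ?_
      ring
  have hb : exp (k * (b - a)) = exp (k * b) * exp (-k * a) := by
    rw [← exp_add]; ring_nf
  rw [zero_mul, sub_eq_zero] at hconst
  rw [hb, mul_assoc, ← hconst, ← mul_assoc, ← exp_add]
  simp

/-- When `g' = s`, the function `g / V + s Λ / V²` is a particular solution of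
`-Λ u' + V u = g`, so subtracting it from `c` leaves a solution of `w' = (V / Λ) w`. -/
theorem sub_particular_eq_exp_mul {c g : ℝ → ℝ} {Λ V s a b : ℝ} (hΛ : Λ ≠ 0) (hV : V ≠ 0)
    (hab : a < b) (hc : ContinuousOn c (Icc a b)) (hg : ContinuousOn g (Icc a b))
    (hc' : ∀ x ∈ Ioo a b, HasDerivAt c ((V * c x - g x) / Λ) x)
    (hg' : ∀ x ∈ Ioo a b, HasDerivAt g s x) :
    c b - g b / V - s * Λ / V ^ 2 = exp (V / Λ * (b - a)) * (c a - g a / V - s * Λ / V ^ 2) :=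
  eq_exp_mul_of_hasDerivAt_eq_mul (w := fun x => c x - g x / V - s * Λ / V ^ 2) hab
    ((hc.sub (hg.div_const V)).sub continuousOn_const) fun x hx => by
      refine (((hc' x hx).sub ((hg' x hx).div_const V)).sub_const (s * Λ / V ^ 2)).congr_deriv ?_
      field_simp

theorem flux_eq_of_exp_relations {Λ V Δx θ P cj cσ cj1 fj fσ fj1 sj sj1 : ℝ} (hΛ : Λ ≠ 0)
    (hV : V ≠ 0) (hΔx : Δx ≠ 0) (hP : P = V * Δx / Λ)
    (hfj : fσ - fj = sj * (θ * Δx)) (hfj1 : fj1 - fσ = sj1 * ((1 - θ) * Δx))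
    (hcj : cσ - fσ / V - sj * Λ / V ^ 2
      = exp (V / Λ * (θ * Δx)) * (cj - fj / V - sj * Λ / V ^ 2))
    (hcj1 : cj1 - fj1 / V - sj1 * Λ / V ^ 2
      = exp (V / Λ * ((1 - θ) * Δx)) * (cσ - fσ / V - sj1 * Λ / V ^ 2)) :
    fσ = Λ / Δx * (Bern (-P) * cj - Bern P * cj1)
      + Δx * (Zfun (-P) θ * sj - Zfun P (1 - θ) * sj1) := by
  have hleft_exponent : V / Λ * (θ * Δx) = θ * P := by rw [hP]; ring
  have hright_exponent : V / Λ * ((1 - θ) * Δx) = (1 - θ) * P := by rw [hP]; ring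
  rw [hleft_exponent] at hcj
  rw [hright_exponent] at hcj1
  obtain ⟨a, ha⟩ : ∃ a, exp (θ * P) = a := ⟨_, rfl⟩
  obtain ⟨b, hb⟩ : ∃ b, exp ((1 - θ) * P) = b := ⟨_, rfl⟩
  have ha0 : a ≠ 0 := ha ▸ (exp_pos _).ne'
  have hb0 : b ≠ 0 := hb ▸ (exp_pos _).ne'
  have hP0 : P ≠ 0 := by rw [hP]; positivity
  have hab : exp P = a * b := by rw [← ha, ← hb, ← exp_add]; ring_nf
  have hab1 : a * b - 1 ≠ 0 := by
    rw [← hab, sub_ne_zero, Ne, exp_eq_one_iff]; exact hP0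
  have hab1' : 1 - a * b ≠ 0 := by rw [← neg_sub]; exact neg_ne_zero.2 hab1
  have hsolve : fσ * (a * b - 1) = V * (a * b * cj - cj1)
      + sj * (b * Λ / V - a * b * Λ / V + a * b * θ * Δx)
      + sj1 * (Λ / V - b * Λ / V + (1 - θ) * Δx) := by
    rw [ha] at hcj
    rw [hb] at hcj1
    linear_combination (norm := skip) b * V * hcj + V * hcj1 + a * b * hfj + hfj1
    field_simp
    ring
  have hΛ' : Λ = V * Δx / P := by rw [hP]; field_simp
  have hexp_neg : exp (-P) = (a * b)⁻¹ := by rw [exp_neg, hab]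
  have hexp_neg_θ : exp (θ * -P) = a⁻¹ := by rw [mul_neg, exp_neg, ha]
  rw [eq_div_of_mul_eq hab1 hsolve]
  simp only [Bern, Zfun, hab, hb, hexp_neg, hexp_neg_θ, hΛ']
  field_simp
  ring

/-- For constant coefficients and a piecewise constant source, the exact flux at
the interface point equals the Scharfetter–Gummel homogeneous flux plus the
inhomogeneous correction. -/
theorem complete_flux_representation
    (Λ V xj xσ xj1 : ℝ) (hΛ : 0 < Λ) (hV : V ≠ 0)
    (h1 : xj < xσ) (h2 : xσ < xj1)
    (Δx θ P : ℝ) (hΔx : Δx = xj1 - xj) (hθ : θ = (xσ - xj) / Δx) (hP : P = V * Δx / Λ)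
    (sj sj1 : ℝ) (c : ℝ → ℝ)
    (hc : ∀ x ∈ Set.Icc xj xj1, DifferentiableAt ℝ c x)
    (f : ℝ → ℝ) (hf : f = fun x => -Λ * deriv c x + c x * V)
    (hfc : ContinuousOn f (Set.Icc xj xj1))
    (hf1 : ∀ x ∈ Set.Ioo xj xσ, HasDerivAt f sj x)
    (hf2 : ∀ x ∈ Set.Ioo xσ xj1, HasDerivAt f sj1 x) :
    f xσ = Λ / Δx * (Bern (-P) * c xj - Bern P * c xj1)
      + Δx * (Zfun (-P) θ * sj - Zfun P (1 - θ) * sj1) := by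
  have hΔx0 : Δx ≠ 0 := by rw [hΔx]; linarith
  have hleft : Icc xj xσ ⊆ Icc xj xj1 := Icc_subset_Icc_right h2.le
  have hright : Icc xσ xj1 ⊆ Icc xj xj1 := Icc_subset_Icc_left h1.le
  have hcc : ContinuousOn c (Icc xj xj1) := fun x hx => (hc x hx).continuousAt.continuousWithinAt
  have hode : ∀ x ∈ Ioo xj xj1, HasDerivAt c ((V * c x - f x) / Λ) x := fun x hx =>
    (hc x (Ioo_subset_Icc_self hx)).hasDerivAt.congr_deriv (by subst hf; field_simp; ring)
  have hlen_left : xσ - xj = θ * Δx := by rw [hθ]; field_simp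
  have hlen_right : xj1 - xσ = (1 - θ) * Δx := by linear_combination -hΔx - hlen_left
  have hflux_left := sub_eq_mul_sub_of_hasDerivAt_const h1 (hfc.mono hleft) hf1
  have hflux_right := sub_eq_mul_sub_of_hasDerivAt_const h2 (hfc.mono hright) hf2
  have hc_left := sub_particular_eq_exp_mul hΛ.ne' hV h1 (hcc.mono hleft) (hfc.mono hleft)
    (fun x hx => hode x ⟨hx.1, hx.2.trans h2⟩) hf1
  have hc_right := sub_particular_eq_exp_mul hΛ.ne' hV h2 (hcc.mono hright) (hfc.mono hright)
    (fun x hx => hode x ⟨h1.trans hx.1, hx.2⟩) hf2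
  rw [hlen_left] at hflux_left hc_left
  rw [hlen_right] at hflux_right hc_right
  exact flux_eq_of_exp_relations hΛ.ne' hV hΔx0 hP hflux_left hflux_right hc_left hc_right
end
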